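/- On the round 3-sphere S³ = SU(2), for each ψ in the (2j+2)-dimensional irreducible representation W_j of SU(2), the section x ↦ ψ (constant, in the left trivialization) is a spin (j+1/2) Killing spinor with Killing number 1/2, and the section x ↦ π_j(x⁻¹)ψ is a spin (j+1/2) Killing spinor with Killing number -1/2. These give spaces of Killing spinors of dimension exactly 2j+2 for each of μ = ±1/2. -/

import Mathlib

/-!
Along the left-invariant curve `t ↦ x · exp(tξ)` the Killing equation is the linear ODE
`u' = (μ - 1/2) dπ(ξ) u`. For `μ = 1/2` it says that `ψ` is constant along these curves, and for
`μ = -1/2` it is solved by `x ↦ π(x⁻¹)ψ`, because `(x exp(tξ))⁻¹ = exp(-tξ) x⁻¹`. Since every unit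
quaternion is `exp ξ` for an imaginary `ξ`, uniqueness for linear ODEs shows that a Killing spinor
is determined by its value at `1`, so these are all of them.
-/

open NormedSpace
open scoped Quaternion

lemma HasDerivAt.of_comp_const_add {W : Type*} [NormedAddCommGroup W] [NormedSpace ℝ W]
    {f : ℝ → W} {f' : W} {a : ℝ} (h : HasDerivAt (fun t => f (a + t)) f' 0) :
    HasDerivAt f f' a := by
  have h' : HasDerivAt (fun t => f (a + t)) f' (-a + a) := by rwa [neg_add_cancel]
  simpa using h'.comp_const_add (-a) a

lemma NormedSpace.exp_add_smul {𝔸 : Type*} [NormedRing 𝔸] [NormedAlgebra ℝ 𝔸] [CompleteSpace 𝔸]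
    (a b : ℝ) (x : 𝔸) : exp ((a + b) • x) = exp (a • x) * exp (b • x) := by
  let : NormedAlgebra ℚ 𝔸 := .restrictScalars ℚ ℝ 𝔸
  rw [add_smul, exp_add_of_commute (((Commute.refl x).smul_left a).smul_right b)]

namespace Quaternion

lemma exists_re_eq_zero_norm_eq_one_im_eq (q : ℍ[ℝ]) :
    ∃ u : ℍ[ℝ], u.re = 0 ∧ ‖u‖ = 1 ∧ q.im = ‖q.im‖ • u := by
  by_cases h : q.im = 0
  · let i : ℍ[ℝ] := ⟨0, 1, 0, 0⟩
    have hi : ‖i‖ * ‖i‖ = 1 := by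
      rw [← normSq_eq_norm_mul_self, normSq_def']
      norm_num [i]
    refine ⟨i, rfl, by nlinarith [norm_nonneg i], by rw [h, norm_zero, zero_smul]⟩
  · refine ⟨‖q.im‖⁻¹ • q.im, by simp, ?_, ?_⟩
    · rw [norm_smul, norm_inv, norm_norm, inv_mul_cancel₀ (norm_ne_zero_iff.2 h)]
    · rw [smul_smul, mul_inv_cancel₀ (norm_ne_zero_iff.2 h), one_smul]

lemma normSq_eq_re_sq_add_norm_im_sq (q : ℍ[ℝ]) : normSq q = q.re ^ 2 + ‖q.im‖ ^ 2 := by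
  rw [sq ‖q.im‖, ← normSq_eq_norm_mul_self, normSq_def', normSq_def']
  simp only [re_im, imI_im, imJ_im, imK_im]
  ring

/-- A unit quaternion `q = cos θ + sin θ · u`, with `u` a unit imaginary quaternion, is
`exp (θ u)`. -/
theorem exists_re_eq_zero_exp_eq {q : ℍ[ℝ]} (hq : normSq q = 1) :
    ∃ ξ : ℍ[ℝ], ξ.re = 0 ∧ exp ξ = q := by
  obtain ⟨u, hu_re, hu_norm, hq_im⟩ := exists_re_eq_zero_norm_eq_one_im_eq q
  have hq' := normSq_eq_re_sq_add_norm_im_sq q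
  set θ := Real.arccos q.re
  have hcos : Real.cos θ = q.re :=
    Real.cos_arccos (by nlinarith [sq_nonneg ‖q.im‖]) (by nlinarith [sq_nonneg ‖q.im‖])
  have hsin : Real.sin θ = ‖q.im‖ := by
    rw [Real.sin_arccos, show 1 - q.re ^ 2 = ‖q.im‖ ^ 2 by linarith,
      Real.sqrt_sq (norm_nonneg _)]
  have hθu_re : (θ • u).re = 0 := by simp [hu_re]
  have hθu_norm : ‖θ • u‖ = θ := by
    rw [norm_smul, hu_norm, mul_one, Real.norm_of_nonneg (Real.arccos_nonneg _)]
  refine ⟨θ • u, hθu_re, ?_⟩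
  rw [exp_of_re_eq_zero _ hθu_re, hθu_norm, smul_smul,
    div_mul_cancel_of_imp (fun h => by simp [h]), hcos, hsin, ← hq_im, re_add_im]

lemma normSq_coe_unitary (x : unitary ℍ[ℝ]) : normSq (x : ℍ[ℝ]) = 1 := by
  have h : star (x : ℍ[ℝ]) * x = 1 := Unitary.coe_star_mul_self x
  rw [star_mul_self, ← coe_one] at h
  exact coe_injective h

end Quaternion

section OneParameterSubgroup

variable {E : ∀ ξ : ℍ[ℝ], ξ.re = 0 → ℝ → unitary ℍ[ℝ]}

lemma oneParam_add (hE : ∀ ξ hξ t, (E ξ hξ t : ℍ[ℝ]) = exp (t • ξ)) (ξ : ℍ[ℝ]) (hξ : ξ.re = 0)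
    (a b : ℝ) : E ξ hξ (a + b) = E ξ hξ a * E ξ hξ b :=
  Subtype.ext <| by rw [MulMemClass.coe_mul, hE, hE, hE, exp_add_smul]

lemma oneParam_zero (hE : ∀ ξ hξ t, (E ξ hξ t : ℍ[ℝ]) = exp (t • ξ)) (ξ : ℍ[ℝ])
    (hξ : ξ.re = 0) : E ξ hξ 0 = 1 :=
  Subtype.ext <| by rw [hE, zero_smul, exp_zero, OneMemClass.coe_one]

lemma oneParam_neg (hE : ∀ ξ hξ t, (E ξ hξ t : ℍ[ℝ]) = exp (t • ξ)) (ξ : ℍ[ℝ])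
    (hξ : ξ.re = 0) (hξ' : (-ξ).re = 0) (t : ℝ) : E (-ξ) hξ' t = (E ξ hξ t)⁻¹ := by
  refine (inv_eq_of_mul_eq_one_right (Subtype.ext ?_)).symm
  rw [MulMemClass.coe_mul, hE, hE, smul_neg, ← neg_smul, ← exp_add_smul, add_neg_cancel, zero_smul,
    exp_zero, OneMemClass.coe_one]

lemma exists_oneParam_one_eq (hE : ∀ ξ hξ t, (E ξ hξ t : ℍ[ℝ]) = exp (t • ξ))
    (y : unitary ℍ[ℝ]) : ∃ (ξ : ℍ[ℝ]) (hξ : ξ.re = 0), E ξ hξ 1 = y := by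
  obtain ⟨ξ, hξ, hexp⟩ := Quaternion.exists_re_eq_zero_exp_eq (Quaternion.normSq_coe_unitary y)
  exact ⟨ξ, hξ, Subtype.ext (by rw [hE, one_smul, hexp])⟩

end OneParameterSubgroup

/-- The Killing spinor equation on `S³ = SU(2)` (realized as the group `Sp(1)` of unit
quaternions), in the left trivialization of the spin `(j+1/2)` bundle `S_j`: a section
`s : SU(2) → W_j` is a Killing spinor with Killing number `μ` iff for every point `x` and
every `ξ ∈ su(2)` (an imaginary quaternion), the derivative of `s` along the
left-invariant curve `t ↦ x·exp(tξ)` satisfies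
`∂_ξ s + (1/2)π_j(ξ)s = μ π_j(ξ)s`, i.e. equals `(μ - 1/2)·dπ(ξ)(s x)`. -/
def IsKillingSpinorS3 {W : Type*} [NormedAddCommGroup W] [NormedSpace ℂ W]
    (dπ : Quaternion ℝ → (W →ₗ[ℂ] W))
    (E : ∀ ξ : Quaternion ℝ, ξ.re = 0 → ℝ → unitary (Quaternion ℝ))
    (μ : ℂ) (s : unitary (Quaternion ℝ) → W) : Prop :=
  ∀ (x : unitary (Quaternion ℝ)) (ξ : Quaternion ℝ) (hξ : ξ.re = 0),
    HasDerivAt (fun t : ℝ => s (x * E ξ hξ t)) ((μ - 1 / 2) • dπ ξ (s x)) 0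

section KillingSpinor

variable {W : Type*} [NormedAddCommGroup W] [NormedSpace ℂ W] {dπ : ℍ[ℝ] → (W →ₗ[ℂ] W)}
  {E : ∀ ξ : ℍ[ℝ], ξ.re = 0 → ℝ → unitary ℍ[ℝ]}

lemma isKillingSpinorS3_const (ψ : W) : IsKillingSpinorS3 dπ E (1 / 2) fun _ => ψ := by
  intro x ξ hξ
  simpa using hasDerivAt_const (0 : ℝ) ψ

lemma isKillingSpinorS3_inv_apply (π : unitary ℍ[ℝ] →* (W ≃ₗ[ℂ] W))
    (hdπneg : ∀ ξ, dπ (-ξ) = -dπ ξ) (hE : ∀ ξ hξ t, (E ξ hξ t : ℍ[ℝ]) = exp (t • ξ))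
    (hder : ∀ ξ hξ ψ, HasDerivAt (fun t : ℝ => π (E ξ hξ t) ψ) (dπ ξ ψ) 0) (ψ : W) :
    IsKillingSpinorS3 dπ E (-(1 / 2)) fun x => π x⁻¹ ψ := by
  intro x ξ hξ
  have hξ' : (-ξ).re = 0 := by simp [hξ]
  have hcurve : (fun t : ℝ => π (x * E ξ hξ t)⁻¹ ψ) = fun t => π (E (-ξ) hξ' t) (π x⁻¹ ψ) := by
    funext t
    rw [mul_inv_rev, ← oneParam_neg hE ξ hξ hξ', map_mul, LinearEquiv.mul_apply]
  have hcoeff : (-(1 / 2) - 1 / 2 : ℂ) = -1 := by norm_num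
  simpa only [hcurve, hcoeff, hdπneg, neg_one_smul, LinearMap.neg_apply] using
    hder (-ξ) hξ' (π x⁻¹ ψ)

lemma IsKillingSpinorS3.hasDerivAt_oneParam {μ : ℂ} {s : unitary ℍ[ℝ] → W}
    (hs : IsKillingSpinorS3 dπ E μ s) (hE : ∀ ξ hξ t, (E ξ hξ t : ℍ[ℝ]) = exp (t • ξ))
    (ξ : ℍ[ℝ]) (hξ : ξ.re = 0) (t₀ : ℝ) :
    HasDerivAt (fun t => s (E ξ hξ t)) ((μ - 1 / 2) • dπ ξ (s (E ξ hξ t₀))) t₀ :=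
  HasDerivAt.of_comp_const_add <| by
    simpa only [oneParam_add hE] using hs (E ξ hξ t₀) ξ hξ

/-- Along each `t ↦ exp(tξ)` both sections solve the same linear ODE, and these curves cover
`S³` at `t = 1`. -/
theorem IsKillingSpinorS3.eq_of_apply_one_eq [FiniteDimensional ℂ W] {μ : ℂ}
    {s s' : unitary ℍ[ℝ] → W} (hs : IsKillingSpinorS3 dπ E μ s)
    (hs' : IsKillingSpinorS3 dπ E μ s') (hE : ∀ ξ hξ t, (E ξ hξ t : ℍ[ℝ]) = exp (t • ξ))
    (h1 : s 1 = s' 1) : s = s' := by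
  funext y
  obtain ⟨ξ, hξ, rfl⟩ := exists_oneParam_one_eq hE y
  set L := LinearMap.toContinuousLinearMap ((μ - 1 / 2) • dπ ξ)
  have hsol := ODE_solution_unique_univ (v := fun _ => L) (s := fun _ => Set.univ)
    (fun _ => L.lipschitz.lipschitzOnWith)
    (fun t => ⟨hs.hasDerivAt_oneParam hE ξ hξ t, trivial⟩)
    (fun t => ⟨hs'.hasDerivAt_oneParam hE ξ hξ t, trivial⟩)
    (t₀ := 0) (by rwa [oneParam_zero hE])
  exact congrFun hsol 1

end KillingSpinor

theorem killing_spinors_on_S3_general (W : Type*) [NormedAddCommGroup W]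
    [NormedSpace ℂ W] [FiniteDimensional ℂ W]
    (π : unitary (Quaternion ℝ) →* (W ≃ₗ[ℂ] W))
    (dπ : Quaternion ℝ → (W →ₗ[ℂ] W))
    (hdπneg : ∀ ξ, dπ (-ξ) = -dπ ξ)
    (E : ∀ ξ : Quaternion ℝ, ξ.re = 0 → ℝ → unitary (Quaternion ℝ))
    (hE : ∀ (ξ : Quaternion ℝ) (hξ : ξ.re = 0) (t : ℝ),
      ((E ξ hξ t : Quaternion ℝ)) = NormedSpace.exp (t • ξ))
    (hder : ∀ (ξ : Quaternion ℝ) (hξ : ξ.re = 0) (ψ : W),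
      HasDerivAt (fun t : ℝ => π (E ξ hξ t) ψ) (dπ ξ ψ) 0) :
    (∀ ψ : W, IsKillingSpinorS3 dπ E (1 / 2) fun _ => ψ) ∧
    (∀ ψ : W, IsKillingSpinorS3 dπ E (-(1 / 2)) fun x => π x⁻¹ ψ) ∧
    (∀ s, IsKillingSpinorS3 dπ E (1 / 2) s → ∃ ψ : W, s = fun _ => ψ) ∧
    (∀ s, IsKillingSpinorS3 dπ E (-(1 / 2)) s → ∃ ψ : W, s = fun x => π x⁻¹ ψ) := by
  have hinv := isKillingSpinorS3_inv_apply π hdπneg hE hder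
  refine ⟨isKillingSpinorS3_const, hinv, fun s hs => ⟨s 1, ?_⟩, fun s hs => ⟨s 1, ?_⟩⟩
  · exact hs.eq_of_apply_one_eq (isKillingSpinorS3_const (s 1)) hE rfl
  · exact hs.eq_of_apply_one_eq (hinv (s 1)) hE (by simp)

/-- On the round 3-sphere `S³ = SU(2)` (unit quaternions), for each `ψ` in the
`(2j+2)`-dimensional irreducible representation `W_j` of `SU(2)`, the constant section
`x ↦ ψ` (in the left trivialization) is a spin `(j+1/2)` Killing spinor with Killing
number `1/2`, and `x ↦ π_j(x⁻¹)ψ` is one with Killing number `-1/2`; moreover every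
Killing spinor with `μ = ±1/2` is of this form, so each of the two spaces of Killing
spinors has dimension exactly `2j+2`.  Here `π` is the group representation, `dπ` the
induced Lie algebra representation (`hder` expresses the compatibility along the
one-parameter subgroups `E ξ _ t = exp(tξ)`). -/
theorem killing_spinors_on_S3 (j : ℕ) (W : Type*) [NormedAddCommGroup W]
    [NormedSpace ℂ W] [FiniteDimensional ℂ W]
    (hdim : Module.finrank ℂ W = 2 * j + 2)
    (π : unitary (Quaternion ℝ) →* (W ≃ₗ[ℂ] W))
    (hirr : ∀ q : Submodule ℂ W,
      (∀ g : unitary (Quaternion ℝ), q.map (π g).toLinearMap ≤ q) → q = ⊥ ∨ q = ⊤)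
    (dπ : Quaternion ℝ → (W →ₗ[ℂ] W))
    (hdπneg : ∀ ξ, dπ (-ξ) = -dπ ξ)
    (E : ∀ ξ : Quaternion ℝ, ξ.re = 0 → ℝ → unitary (Quaternion ℝ))
    (hE : ∀ (ξ : Quaternion ℝ) (hξ : ξ.re = 0) (t : ℝ),
      ((E ξ hξ t : Quaternion ℝ)) = NormedSpace.exp (t • ξ))
    (hder : ∀ (ξ : Quaternion ℝ) (hξ : ξ.re = 0) (ψ : W),
      HasDerivAt (fun t : ℝ => π (E ξ hξ t) ψ) (dπ ξ ψ) 0) :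
    (∀ ψ : W, IsKillingSpinorS3 dπ E (1 / 2) fun _ => ψ) ∧
    (∀ ψ : W, IsKillingSpinorS3 dπ E (-(1 / 2)) fun x => π x⁻¹ ψ) ∧
    (∀ s, IsKillingSpinorS3 dπ E (1 / 2) s → ∃ ψ : W, s = fun _ => ψ) ∧
    (∀ s, IsKillingSpinorS3 dπ E (-(1 / 2)) s → ∃ ψ : W, s = fun x => π x⁻¹ ψ) :=
  killing_spinors_on_S3_general W π dπ hdπneg E hE hder
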